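/- arXiv:1809.01220 — 3 statements merged into one kernel-verified Lean document; each statement's English description precedes it below -/
import Mathlib

section
/- Suppose r(h) < 1 for every safe history h. Let Δ : ℝ → ℝ be concave and monotone nondecreasing with 0 ≤ Δ x ≤ 1 for all x ∈ ℝ, and let f, g be real-valued functions on trajectories with ∑_{all trajectories τ} p(τ)·f(τ) ≤ ∑_{all trajectories τ} p(τ)·g(τ). If ser(τ) ≤ Δ(f(τ)) for every safe trajectory τ with p(τ) > 0, then er(s₀, π) ≤ Δ(∑_{all trajectories τ} p(τ)·g(τ)). -/
open Finset
open scoped Classical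

noncomputable section

/-- The restriction of a trajectory `τ : Fin (n+1) → S` to its first `t+1` entries. -/
def pre {S : Type*} {n : ℕ} (τ : Fin (n + 1) → S) (t : ℕ) (ht : t + 1 ≤ n + 1) :
    Fin (t + 1) → S :=
  fun i => τ (Fin.castLE ht i)

/-- The probability of the trajectory `τ` under policy `π`. -/
def prob {S A : Type*} {n : ℕ} (T : S → A → S → ℝ)
    (π : (t : ℕ) → (Fin (t + 1) → S) → A) (τ : Fin (n + 1) → S) : ℝ :=
  ∏ t : Fin n, T (τ t.castSucc) (π t (pre τ t (Nat.succ_le_succ t.isLt.le))) (τ t.succ)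

/-- The immediate risk of a history `h` of length `t+1`: the probability that the action
taken by the policy at `h` leads to an unsafe state. -/
def risk {S A : Type*} [Fintype S] (T : S → A → S → ℝ) (C : Set S)
    (π : (t : ℕ) → (Fin (t + 1) → S) → A) {t : ℕ} (h : Fin (t + 1) → S) : ℝ :=
  ∑ s' ∈ univ.filter (fun s' => s' ∉ C), T (h (Fin.last t)) (π t h) s'

/-- The survival product of a trajectory. -/
def surv {S A : Type*} [Fintype S] {n : ℕ} (T : S → A → S → ℝ) (C : Set S)
    (π : (t : ℕ) → (Fin (t + 1) → S) → A) (τ : Fin (n + 1) → S) : ℝ :=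
  ∏ t : Fin n, (1 - risk T C π (pre τ t (Nat.succ_le_succ t.isLt.le)))

/-- The sequence execution risk of a trajectory: `(1 - P(τ))/P(τ)` for safe trajectories,
and `0` otherwise. -/
def ser {S A : Type*} [Fintype S] {n : ℕ} (T : S → A → S → ℝ) (C : Set S)
    (π : (t : ℕ) → (Fin (t + 1) → S) → A) (τ : Fin (n + 1) → S) : ℝ :=
  if ∀ i, τ i ∈ C then (1 - surv T C π τ) / surv T C π τ else 0

/-- The execution risk of the policy `π` from the initial state `s₀`. -/
def er {S A : Type*} [Fintype S] (n : ℕ) (T : S → A → S → ℝ) (C : Set S)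
    (π : (t : ℕ) → (Fin (t + 1) → S) → A) (s₀ : S) : ℝ :=
  1 - ∑ τ ∈ univ.filter (fun τ : Fin (n + 1) → S => τ 0 = s₀ ∧ ∀ i, τ i ∈ C), prob T π τ

/-!
Conditioning the policy's transition law on landing in `C` gives a kernel (`safeKernel`) under
which a safe trajectory has weight `p(τ) / P(τ)`. On every history it reaches, this kernel is a
probability distribution (this is where `r(h) < 1` enters), so, exactly like the weights `p(τ)`,
these weights sum to one. Hence `er = 1 - ∑_safe p = ∑_safe (p / P - p) = ∑_safe p · ser`, and the
local bounds, Jensen's inequality for the concave `Δ` and the monotonicity of `Δ` give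
`er ≤ ∑ p · Δ(f) ≤ Δ(E[f]) ≤ Δ(E[g])`.
-/

section Prefix

variable {S : Type*}

lemma pre_zero {n : ℕ} (τ : Fin (n + 1) → S) (t : ℕ) (ht : t + 1 ≤ n + 1) :
    pre τ t ht 0 = τ 0 :=
  congrArg τ (Fin.ext (by simp))

lemma pre_last {n : ℕ} (τ : Fin (n + 1) → S) (i : Fin n) :
    pre τ i (Nat.succ_le_succ i.isLt.le) (Fin.last i) = τ i.castSucc :=
  congrArg τ (Fin.ext rfl)

lemma pre_self {t : ℕ} (h : Fin (t + 1) → S) (ht : t + 1 ≤ t + 1) : pre h t ht = h :=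
  rfl

lemma pre_snoc {t : ℕ} (h : Fin (t + 1) → S) (s : S) (m : ℕ) (hm : m + 1 ≤ t + 1) :
    pre (Fin.snoc h s : Fin (t + 2) → S) m (hm.trans t.succ.le_succ) = pre h m hm := by
  funext j
  exact Fin.snoc_castSucc (α := fun _ => S) (i := Fin.castLE hm j) ..

end Prefix

section PathWeight

variable {S : Type*}

def pathWeight (W : (t : ℕ) → (Fin (t + 1) → S) → S → ℝ) {t : ℕ} (h : Fin (t + 1) → S) : ℝ :=
  ∏ i : Fin t, W i (pre h i (Nat.succ_le_succ i.isLt.le)) (h i.succ)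

lemma pathWeight_snoc (W : (t : ℕ) → (Fin (t + 1) → S) → S → ℝ) {t : ℕ}
    (h : Fin (t + 1) → S) (s : S) :
    pathWeight W (Fin.snoc h s : Fin (t + 2) → S) = pathWeight W h * W t h s := by
  rw [pathWeight, Fin.prod_univ_castSucc]
  congr 1
  · refine Finset.prod_congr rfl fun i _ => ?_
    rw [Fin.succ_castSucc, Fin.snoc_castSucc]
    exact congrArg₂ (W i) (pre_snoc h s i _) rfl
  · rw [Fin.succ_last, Fin.snoc_last]
    exact congrArg₂ (W t) ((pre_snoc h s t le_rfl).trans (pre_self h le_rfl)) rfl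

variable [Fintype S]

def historiesFrom (t : ℕ) (s₀ : S) : Finset (Fin (t + 1) → S) :=
  univ.filter fun h => h 0 = s₀

def safeHistoriesFrom (t : ℕ) (C : Set S) (s₀ : S) : Finset (Fin (t + 1) → S) :=
  univ.filter fun h => h 0 = s₀ ∧ ∀ i, h i ∈ C

lemma sum_pathWeight_succ (W : (t : ℕ) → (Fin (t + 1) → S) → S → ℝ) (s₀ : S) (t : ℕ) :
    ∑ h ∈ historiesFrom (t + 1) s₀, pathWeight W h
      = ∑ h ∈ historiesFrom t s₀, pathWeight W h * ∑ s, W t h s := by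
  have snoc_zero (h : Fin (t + 1) → S) (s : S) : (Fin.snoc h s : Fin (t + 2) → S) 0 = h 0 :=
    Fin.snoc_castSucc (α := fun _ => S) (i := 0) ..
  rw [historiesFrom, historiesFrom, Finset.sum_filter, Finset.sum_filter,
    ← (Fin.snocEquiv fun _ => S).sum_comp, Fintype.sum_prod_type, Finset.sum_comm]
  refine Finset.sum_congr rfl fun h _ => ?_
  change ∑ s, (if (Fin.snoc h s : Fin (t + 2) → S) 0 = s₀ then
    pathWeight W (Fin.snoc h s : Fin (t + 2) → S) else 0) = _
  simp only [snoc_zero, pathWeight_snoc, Finset.mul_sum]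
  split_ifs <;> simp

lemma sum_pathWeight_eq_one (W : (t : ℕ) → (Fin (t + 1) → S) → S → ℝ) (s₀ : S) (n : ℕ)
    (hW : ∀ t < n, ∀ h : Fin (t + 1) → S, h 0 = s₀ → pathWeight W h ≠ 0 → ∑ s, W t h s = 1) :
    ∀ t ≤ n, ∑ h ∈ historiesFrom t s₀, pathWeight W h = 1 := by
  intro t
  induction t with
  | zero =>
    intro _
    rw [Finset.sum_eq_single_of_mem (fun _ => s₀) (by simp [historiesFrom]) ?_]
    · simp [pathWeight]
    · intro h h0 hne
      exact absurd (funext fun i => (Fin.fin_one_eq_zero i ▸ (Finset.mem_filter.mp h0).2)) hne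
  | succ t ih =>
    intro ht
    rw [sum_pathWeight_succ, ← ih (by omega)]
    refine Finset.sum_congr rfl fun h hh => ?_
    by_cases hz : pathWeight W h = 0
    · rw [hz, zero_mul]
    · rw [hW t ht h (Finset.mem_filter.mp hh).2 hz, mul_one]

end PathWeight

section Risk

variable {S A : Type*} (T : S → A → S → ℝ) (C : Set S) (π : (t : ℕ) → (Fin (t + 1) → S) → A)

def policyKernel (t : ℕ) (h : Fin (t + 1) → S) (s : S) : ℝ :=
  T (h (Fin.last t)) (π t h) s

lemma prob_eq_pathWeight {n : ℕ} (τ : Fin (n + 1) → S) :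
    prob T π τ = pathWeight (policyKernel T π) τ :=
  Finset.prod_congr rfl fun i _ => by rw [policyKernel, pre_last]

lemma prob_nonneg (hT0 : ∀ s a s', 0 ≤ T s a s') {n : ℕ} (τ : Fin (n + 1) → S) :
    0 ≤ prob T π τ :=
  Finset.prod_nonneg fun _ _ => hT0 _ _ _

variable [Fintype S]

def safeKernel (t : ℕ) (h : Fin (t + 1) → S) (s : S) : ℝ :=
  C.indicator (policyKernel T π t h) s / (1 - risk T C π h)

lemma sum_indicator_policyKernel (hT1 : ∀ s a, ∑ s', T s a s' = 1) {t : ℕ}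
    (h : Fin (t + 1) → S) : ∑ s, C.indicator (policyKernel T π t h) s = 1 - risk T C π h := by
  simp only [Set.indicator_apply, eq_sub_iff_add_eq, risk, policyKernel, ← Finset.sum_filter]
  exact (Finset.sum_filter_add_sum_filter_not _ _ _).trans (hT1 _ _)

lemma sum_safeKernel (hT1 : ∀ s a, ∑ s', T s a s' = 1) {t : ℕ} (h : Fin (t + 1) → S)
    (hr : risk T C π h < 1) : ∑ s, safeKernel T C π t h s = 1 := by
  simp only [safeKernel, ← Finset.sum_div]
  rw [sum_indicator_policyKernel T C π hT1, div_self]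
  linarith

lemma pathWeight_safeKernel_of_safe {t : ℕ} {h : Fin (t + 1) → S} (hC : ∀ i, h i ∈ C) :
    pathWeight (safeKernel T C π) h = prob T π h / surv T C π h := by
  rw [prob_eq_pathWeight, pathWeight, pathWeight, surv, ← Finset.prod_div_distrib]
  exact Finset.prod_congr rfl fun i _ => by rw [safeKernel, Set.indicator_of_mem (hC _)]

lemma pathWeight_safeKernel_of_not_safe {t : ℕ} {h : Fin (t + 1) → S} (h0 : h 0 ∈ C)
    (hC : ¬ ∀ i, h i ∈ C) : pathWeight (safeKernel T C π) h = 0 := by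
  obtain ⟨i, hi⟩ := not_forall.mp hC
  rcases Fin.eq_zero_or_eq_succ i with rfl | ⟨j, rfl⟩
  · exact absurd h0 hi
  exact Finset.prod_eq_zero (Finset.mem_univ j)
    (by rw [safeKernel, Set.indicator_of_notMem hi, zero_div])

variable {T C π}

lemma surv_pos {n : ℕ} {s₀ : S}
    (hrisk : ∀ t ≤ n, ∀ h : Fin (t + 1) → S, h 0 = s₀ → (∀ i, h i ∈ C) → risk T C π h < 1)
    {τ : Fin (n + 1) → S} (hτ : τ ∈ safeHistoriesFrom n C s₀) : 0 < surv T C π τ := by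
  obtain ⟨h0, hC⟩ := (Finset.mem_filter.mp hτ).2
  exact Finset.prod_pos fun i _ =>
    sub_pos.mpr (hrisk i i.isLt.le _ ((pre_zero τ _ _).trans h0) fun _ => hC _)

lemma sum_prob_eq_one (hT1 : ∀ s a, ∑ s', T s a s' = 1) (n : ℕ) (s₀ : S) :
    ∑ τ ∈ historiesFrom n s₀, prob T π τ = 1 := by
  simp only [prob_eq_pathWeight]
  exact sum_pathWeight_eq_one _ s₀ n (fun _ _ _ _ _ => hT1 _ _) n le_rfl

lemma sum_prob_div_surv_eq_one (hT1 : ∀ s a, ∑ s', T s a s' = 1) {n : ℕ} {s₀ : S} (hs₀ : s₀ ∈ C)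
    (hrisk : ∀ t ≤ n, ∀ h : Fin (t + 1) → S, h 0 = s₀ → (∀ i, h i ∈ C) → risk T C π h < 1) :
    ∑ τ ∈ safeHistoriesFrom n C s₀, prob T π τ / surv T C π τ = 1 := by
  have reachable_safe {t : ℕ} (h : Fin (t + 1) → S) (h0 : h 0 = s₀)
      (hw : pathWeight (safeKernel T C π) h ≠ 0) : ∀ i, h i ∈ C := by
    by_contra hC
    exact hw (pathWeight_safeKernel_of_not_safe T C π (h0 ▸ hs₀) hC)
  rw [← sum_pathWeight_eq_one (safeKernel T C π) s₀ n
    (fun t ht h h0 hw => sum_safeKernel T C π hT1 h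
      (hrisk t ht.le h h0 (reachable_safe h h0 hw))) n le_rfl,
    safeHistoriesFrom, historiesFrom, ← Finset.filter_filter, Finset.sum_filter]
  refine Finset.sum_congr rfl fun τ hτ => ?_
  split_ifs with hC
  · exact (pathWeight_safeKernel_of_safe T C π hC).symm
  · exact (pathWeight_safeKernel_of_not_safe T C π
      ((Finset.mem_filter.mp hτ).2 ▸ hs₀) hC).symm

lemma er_eq_sum_prob_mul_ser (hT1 : ∀ s a, ∑ s', T s a s' = 1) {n : ℕ} {s₀ : S} (hs₀ : s₀ ∈ C)
    (hrisk : ∀ t ≤ n, ∀ h : Fin (t + 1) → S, h 0 = s₀ → (∀ i, h i ∈ C) → risk T C π h < 1) :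
    er n T C π s₀ = ∑ τ ∈ safeHistoriesFrom n C s₀, prob T π τ * ser T C π τ := by
  change 1 - ∑ τ ∈ safeHistoriesFrom n C s₀, prob T π τ = _
  rw [← sum_prob_div_surv_eq_one hT1 hs₀ hrisk, ← Finset.sum_sub_distrib]
  refine Finset.sum_congr rfl fun τ hτ => ?_
  have hP := (surv_pos hrisk hτ).ne'
  rw [ser, if_pos (Finset.mem_filter.mp hτ).2.2]
  field_simp

end Risk

theorem vulcan_theorem_one_general
    {S A : Type*} [Fintype S]
    (n : ℕ)
    (C : Set S) (s₀ : S) (hs₀ : s₀ ∈ C)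
    (T : S → A → S → ℝ)
    (hT0 : ∀ s a s', 0 ≤ T s a s')
    (hT1 : ∀ s a, ∑ s', T s a s' = 1)
    (π : (t : ℕ) → (Fin (t + 1) → S) → A)
    (hrisk : ∀ (t : ℕ), t ≤ n → ∀ h : Fin (t + 1) → S, h 0 = s₀ → (∀ i, h i ∈ C) →
      risk T C π h < 1)
    (Δ : ℝ → ℝ)
    (hΔconc : ConcaveOn ℝ Set.univ Δ)
    (hΔmono : Monotone Δ)
    (hΔ0 : ∀ x, 0 ≤ Δ x)
    (f g : (Fin (n + 1) → S) → ℝ)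
    (hfg : ∑ τ ∈ univ.filter (fun τ : Fin (n + 1) → S => τ 0 = s₀), prob T π τ * f τ
        ≤ ∑ τ ∈ univ.filter (fun τ : Fin (n + 1) → S => τ 0 = s₀), prob T π τ * g τ)
    (hser : ∀ τ : Fin (n + 1) → S, τ 0 = s₀ → (∀ i, τ i ∈ C) → 0 < prob T π τ →
      ser T C π τ ≤ Δ (f τ)) :
    er n T C π s₀
      ≤ Δ (∑ τ ∈ univ.filter (fun τ : Fin (n + 1) → S => τ 0 = s₀), prob T π τ * g τ) := by
  have hp : ∀ τ : Fin (n + 1) → S, 0 ≤ prob T π τ := prob_nonneg T π hT0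
  calc er n T C π s₀ = ∑ τ ∈ safeHistoriesFrom n C s₀, prob T π τ * ser T C π τ :=
        er_eq_sum_prob_mul_ser hT1 hs₀ hrisk
    _ ≤ ∑ τ ∈ safeHistoriesFrom n C s₀, prob T π τ * Δ (f τ) := by
        refine Finset.sum_le_sum fun τ hτ => ?_
        obtain ⟨h0, hC⟩ := (Finset.mem_filter.mp hτ).2
        rcases (hp τ).eq_or_lt with hzero | hpos
        · simp [← hzero]
        · exact mul_le_mul_of_nonneg_left (hser τ h0 hC hpos) hpos.le
    _ ≤ ∑ τ ∈ historiesFrom n s₀, prob T π τ * Δ (f τ) :=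
        Finset.sum_le_sum_of_subset_of_nonneg (Finset.monotone_filter_right _ fun _ _ h => h.1)
          fun τ _ _ => mul_nonneg (hp τ) (hΔ0 _)
    _ ≤ Δ (∑ τ ∈ historiesFrom n s₀, prob T π τ * f τ) := by
        simpa using hΔconc.le_map_sum (fun τ _ => hp τ) (sum_prob_eq_one hT1 n s₀)
          fun _ _ => Set.mem_univ _
    _ ≤ _ := hΔmono hfg

/-- **Theorem 1 of the paper.** If the local constraint `ser(τ) ≤ Δ(f(τ))` holds for every
safe trajectory reachable under the policy, where `Δ` is concave, nondecreasing and
`[0,1]`-valued and `E[f] ≤ E[g]`, then the execution risk is bounded by `Δ(E[g])`. -/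
theorem vulcan_theorem_one
    {S A : Type*} [Fintype S] [Nonempty S] [Fintype A] [Nonempty A]
    (n : ℕ) (hn : 1 ≤ n)
    (C : Set S) (s₀ : S) (hs₀ : s₀ ∈ C)
    (T : S → A → S → ℝ)
    (hT0 : ∀ s a s', 0 ≤ T s a s')
    (hT1 : ∀ s a, ∑ s', T s a s' = 1)
    (π : (t : ℕ) → (Fin (t + 1) → S) → A)
    (hrisk : ∀ (t : ℕ), t ≤ n → ∀ h : Fin (t + 1) → S, h 0 = s₀ → (∀ i, h i ∈ C) →
      risk T C π h < 1)
    (Δ : ℝ → ℝ)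
    (hΔconc : ConcaveOn ℝ Set.univ Δ)
    (hΔmono : Monotone Δ)
    (hΔ0 : ∀ x, 0 ≤ Δ x) (hΔ1 : ∀ x, Δ x ≤ 1)
    (f g : (Fin (n + 1) → S) → ℝ)
    (hfg : ∑ τ ∈ univ.filter (fun τ : Fin (n + 1) → S => τ 0 = s₀), prob T π τ * f τ
        ≤ ∑ τ ∈ univ.filter (fun τ : Fin (n + 1) → S => τ 0 = s₀), prob T π τ * g τ)
    (hser : ∀ τ : Fin (n + 1) → S, τ 0 = s₀ → (∀ i, τ i ∈ C) → 0 < prob T π τ →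
      ser T C π τ ≤ Δ (f τ)) :
    er n T C π s₀
      ≤ Δ (∑ τ ∈ univ.filter (fun τ : Fin (n + 1) → S => τ 0 = s₀), prob T π τ * g τ) :=
  vulcan_theorem_one_general n C s₀ hs₀ T hT0 hT1 π hrisk Δ hΔconc hΔmono hΔ0 f g hfg hser
end
end

section
/- Suppose r(h) < 1 for every safe history h. Then for every 0 ≤ t ≤ n and every safe history h of length t+1, ∑_{τ a safe trajectory with prefix_t τ = h} ∏_{i=t}^{n-1} T (τ i) (π (prefix_i τ)) (τ (i+1)) / (1 - r(prefix_i τ)) = 1. -/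
open Finset
open scoped Classical

noncomputable section

/-!
The sum is peeled off one step at a time by backward induction on `t`. Splitting the safe
extensions of `h` according to their next state `s' ∈ C`, the factor at step `t` is
`T (h t) (π h) s' / (1 - r h)` and, by induction, the remaining sum over the safe extensions
of `h` followed by `s'` is `1`. What is left is `∑_{s' ∈ C} T (h t) (π h) s' / (1 - r h)`,
which is `1` because the mass that `T` puts on `C` is exactly `1 - r h`.
-/

section

variable {S A : Type*} {n : ℕ}

theorem pre_self_s2 (τ : Fin (n + 1) → S) : pre τ n le_rfl = τ := rfl

theorem pre_succ {t : ℕ} (τ : Fin (n + 1) → S) (ht : t < n) :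
    pre τ (t + 1) (Nat.succ_le_succ ht) =
      Fin.snoc (pre τ t (Nat.succ_le_succ ht.le)) (τ ⟨t + 1, Nat.succ_lt_succ ht⟩) := by
  funext i
  refine Fin.lastCases ?_ (fun j => ?_) i
  · rw [Fin.snoc_last]; rfl
  · rw [Fin.snoc_castSucc]; rfl

theorem pre_succ_eq_snoc_iff {t : ℕ} (τ : Fin (n + 1) → S) (ht : t < n)
    (h : Fin (t + 1) → S) (s' : S) :
    pre τ (t + 1) (Nat.succ_le_succ ht) = Fin.snoc h s' ↔
      pre τ t (Nat.succ_le_succ ht.le) = h ∧ τ ⟨t + 1, Nat.succ_lt_succ ht⟩ = s' := by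
  rw [pre_succ τ ht, Fin.snoc_inj]

theorem prod_filter_le_eq_mul {M : Type*} [CommMonoid M] {t : ℕ} (ht : t < n)
    (f : Fin n → M) :
    ∏ i ∈ univ.filter (fun i : Fin n => t ≤ (i : ℕ)), f i =
      f ⟨t, ht⟩ * ∏ i ∈ univ.filter (fun i : Fin n => t + 1 ≤ (i : ℕ)), f i := by
  have hsplit : univ.filter (fun i : Fin n => t ≤ (i : ℕ)) =
      insert ⟨t, ht⟩ (univ.filter (fun i : Fin n => t + 1 ≤ (i : ℕ))) := by
    ext i
    simp only [mem_filter, mem_univ, true_and, mem_insert, Fin.ext_iff]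
    omega
  rw [hsplit, prod_insert (by simp)]

variable [Fintype S]

def safeExtensions (C : Set S) {t : ℕ} (ht : t ≤ n) (h : Fin (t + 1) → S) :
    Finset (Fin (n + 1) → S) :=
  univ.filter (fun τ => (∀ i, τ i ∈ C) ∧ pre τ t (Nat.succ_le_succ ht) = h)

theorem mem_safeExtensions {C : Set S} {t : ℕ} {ht : t ≤ n} {h : Fin (t + 1) → S}
    {τ : Fin (n + 1) → S} :
    τ ∈ safeExtensions C ht h ↔ (∀ i, τ i ∈ C) ∧ pre τ t (Nat.succ_le_succ ht) = h := by
  simp [safeExtensions]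

theorem safeExtensions_self (C : Set S) (h : Fin (n + 1) → S)
    (hsafe : ∀ i, h i ∈ C) : safeExtensions C le_rfl h = {h} := by
  ext τ
  simp only [mem_safeExtensions, pre_self_s2, mem_singleton, and_iff_right_iff_imp]
  rintro rfl
  exact hsafe

theorem sum_safeExtensions_eq_sum_snoc {M : Type*} [AddCommMonoid M]
    (C : Set S) {t : ℕ} (ht : t < n) (h : Fin (t + 1) → S) (f : (Fin (n + 1) → S) → M) :
    ∑ τ ∈ safeExtensions C ht.le h, f τ =
      ∑ s' ∈ univ.filter (· ∈ C), ∑ τ ∈ safeExtensions C ht (Fin.snoc h s'), f τ := by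
  let next : Fin (n + 1) := ⟨t + 1, Nat.succ_lt_succ ht⟩
  rw [← sum_fiberwise_of_maps_to (g := fun τ => τ next)
    (fun τ hτ => mem_filter.2 ⟨mem_univ _, (mem_safeExtensions.1 hτ).1 next⟩)]
  refine sum_congr rfl fun s' _ => ?_
  congr 1
  ext τ
  simp only [mem_filter, mem_safeExtensions, pre_succ_eq_snoc_iff τ ht, next]
  tauto

variable (T : S → A → S → ℝ) (C : Set S) (π : (t : ℕ) → (Fin (t + 1) → S) → A)

def renormalizedStep (τ : Fin (n + 1) → S) (i : Fin n) : ℝ :=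
  T (τ i.castSucc) (π i (pre τ i (Nat.succ_le_succ i.isLt.le))) (τ i.succ)
    / (1 - risk T C π (pre τ i (Nat.succ_le_succ i.isLt.le)))

def continuationWeight (t : ℕ) (τ : Fin (n + 1) → S) : ℝ :=
  ∏ i ∈ univ.filter (fun i : Fin n => t ≤ (i : ℕ)), renormalizedStep T C π τ i

theorem continuationWeight_of_pre_eq_snoc {t : ℕ} (ht : t < n) (τ : Fin (n + 1) → S)
    (h : Fin (t + 1) → S) (s' : S) (hτ : pre τ (t + 1) (Nat.succ_le_succ ht) = Fin.snoc h s') :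
    continuationWeight T C π t τ =
      T (h (Fin.last t)) (π t h) s' / (1 - risk T C π h) *
        continuationWeight T C π (t + 1) τ := by
  obtain ⟨rfl, rfl⟩ := (pre_succ_eq_snoc_iff τ ht h s').1 hτ
  exact prod_filter_le_eq_mul ht _

theorem sum_filter_mem_eq_one_sub_risk (hT1 : ∀ s a, ∑ s', T s a s' = 1) {t : ℕ}
    (h : Fin (t + 1) → S) :
    ∑ s' ∈ univ.filter (· ∈ C), T (h (Fin.last t)) (π t h) s' = 1 - risk T C π h := by
  have htotal := sum_filter_add_sum_filter_not univ (· ∈ C) (T (h (Fin.last t)) (π t h))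
  rw [hT1] at htotal
  rw [risk]
  linarith

theorem sum_safeExtensions_continuationWeight (s₀ : S) (hT1 : ∀ s a, ∑ s', T s a s' = 1)
    (hrisk : ∀ (t : ℕ), t ≤ n → ∀ h : Fin (t + 1) → S, h 0 = s₀ → (∀ i, h i ∈ C) →
      risk T C π h < 1)
    {t : ℕ} (ht : t ≤ n) (h : Fin (t + 1) → S) (hh0 : h 0 = s₀) (hhsafe : ∀ i, h i ∈ C) :
    ∑ τ ∈ safeExtensions C ht h, continuationWeight T C π t τ = 1 := by
  obtain htn | rfl := ht.lt_or_eq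
  · have hsurvive : 1 - risk T C π h ≠ 0 := sub_ne_zero.2 (hrisk t ht h hh0 hhsafe).ne'
    calc ∑ τ ∈ safeExtensions C ht h, continuationWeight T C π t τ
        = ∑ s' ∈ univ.filter (· ∈ C), T (h (Fin.last t)) (π t h) s' / (1 - risk T C π h) *
            ∑ τ ∈ safeExtensions C htn (Fin.snoc h s'), continuationWeight T C π (t + 1) τ := by
          rw [sum_safeExtensions_eq_sum_snoc C htn]
          refine sum_congr rfl fun s' _ => ?_
          rw [mul_sum]
          exact sum_congr rfl fun τ hτ =>
            continuationWeight_of_pre_eq_snoc T C π htn τ h s' (mem_safeExtensions.1 hτ).2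
      _ = ∑ s' ∈ univ.filter (· ∈ C), T (h (Fin.last t)) (π t h) s' / (1 - risk T C π h) := by
          refine sum_congr rfl fun s' hs' => ?_
          have hsnoc0 : (Fin.snoc h s' : Fin (t + 2) → S) 0 = s₀ := by
            rw [← Fin.castSucc_zero, Fin.snoc_castSucc, hh0]
          have hsnoc_safe : ∀ i, (Fin.snoc h s' : Fin (t + 2) → S) i ∈ C :=
            Fin.lastCases (by rw [Fin.snoc_last]; exact (mem_filter.1 hs').2)
              fun i => by rw [Fin.snoc_castSucc]; exact hhsafe i
          rw [sum_safeExtensions_continuationWeight s₀ hT1 hrisk htn _ hsnoc0 hsnoc_safe, mul_one]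
      _ = 1 := by
          rw [← sum_div, sum_filter_mem_eq_one_sub_risk T C π hT1, div_self hsurvive]
  · rw [safeExtensions_self C h hhsafe, sum_singleton]
    exact prod_eq_one fun i hi => (not_le.2 i.isLt (mem_filter.1 hi).2).elim
termination_by n - t

end

theorem renormalized_safe_continuations_sum_to_one_general
    {S A : Type*} [Fintype S]
    (n : ℕ)
    (C : Set S) (s₀ : S)
    (T : S → A → S → ℝ)
    (hT1 : ∀ s a, ∑ s', T s a s' = 1)
    (π : (t : ℕ) → (Fin (t + 1) → S) → A)
    (hrisk : ∀ (t : ℕ), t ≤ n → ∀ h : Fin (t + 1) → S, h 0 = s₀ → (∀ i, h i ∈ C) →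
      risk T C π h < 1)
    (t : ℕ) (ht : t ≤ n)
    (h : Fin (t + 1) → S) (hh0 : h 0 = s₀) (hhsafe : ∀ i, h i ∈ C) :
    ∑ τ ∈ univ.filter (fun τ : Fin (n + 1) → S =>
        (∀ i, τ i ∈ C) ∧ pre τ t (Nat.succ_le_succ ht) = h),
      ∏ i ∈ univ.filter (fun i : Fin n => t ≤ (i : ℕ)),
        T (τ i.castSucc) (π i (pre τ i (Nat.succ_le_succ i.isLt.le))) (τ i.succ)
          / (1 - risk T C π (pre τ i (Nat.succ_le_succ i.isLt.le))) = 1 :=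
  sum_safeExtensions_continuationWeight T C π s₀ hT1 hrisk ht h hh0 hhsafe

/-- **Lemma 1 of the paper.** Over all safe trajectories extending a safe history `h`,
the transition probabilities along safe continuations, each renormalized by the per-step
survival probability `1 - r`, sum to one. -/
theorem renormalized_safe_continuations_sum_to_one
    {S A : Type*} [Fintype S] [Nonempty S] [Fintype A] [Nonempty A]
    (n : ℕ) (hn : 1 ≤ n)
    (C : Set S) (s₀ : S) (hs₀ : s₀ ∈ C)
    (T : S → A → S → ℝ)
    (hT0 : ∀ s a s', 0 ≤ T s a s')
    (hT1 : ∀ s a, ∑ s', T s a s' = 1)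
    (π : (t : ℕ) → (Fin (t + 1) → S) → A)
    (hrisk : ∀ (t : ℕ), t ≤ n → ∀ h : Fin (t + 1) → S, h 0 = s₀ → (∀ i, h i ∈ C) →
      risk T C π h < 1)
    (t : ℕ) (ht : t ≤ n)
    (h : Fin (t + 1) → S) (hh0 : h 0 = s₀) (hhsafe : ∀ i, h i ∈ C) :
    ∑ τ ∈ univ.filter (fun τ : Fin (n + 1) → S =>
        (∀ i, τ i ∈ C) ∧ pre τ t (Nat.succ_le_succ ht) = h),
      ∏ i ∈ univ.filter (fun i : Fin n => t ≤ (i : ℕ)),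
        T (τ i.castSucc) (π i (pre τ i (Nat.succ_le_succ i.isLt.le))) (τ i.succ)
          / (1 - risk T C π (pre τ i (Nat.succ_le_succ i.isLt.le))) = 1 :=
  renormalized_safe_continuations_sum_to_one_general n C s₀ T hT1 π hrisk t ht h hh0 hhsafe
end
end

section
/- For every real number M, 6 - 0.02·M ≤ max (5 - 0.01·M) (10 - 0.05·M); in particular there is no M ∈ ℝ for which 6 - 0.02·M is strictly greater than both 5 - 0.01·M and 10 - 0.05·M. -/
/-- The weights `3/4, 1/4` turn the failure probabilities of `a₁`, `a₃` into that of `a₂`,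
`0.02`, but give reward `6.25 > 6`: `a₂` lies strictly below the chord, so it never beats both. -/
lemma penalized_a2_lt_combo (M : ℝ) :
    6 - 0.02 * M < (3 / 4 : ℝ) • (5 - 0.01 * M) + (1 / 4 : ℝ) • (10 - 0.05 * M) := by
  simp only [smul_eq_mul]
  linarith

/-- For the single-decision MDP of Figure 2 of the paper with penalized rewards
`5 - 0.01M`, `6 - 0.02M`, `10 - 0.05M`, action `a₂` is never the unique maximizer of the
penalized reward: for every `M`, `6 - 0.02M ≤ max (5 - 0.01M) (10 - 0.05M)`; in particular
there is no `M` for which `6 - 0.02M` strictly exceeds both alternatives. -/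
theorem penalty_method_cannot_recover_a2 :
    (∀ M : ℝ, 6 - 0.02 * M ≤ max (5 - 0.01 * M) (10 - 0.05 * M)) ∧
      ¬∃ M : ℝ, 5 - 0.01 * M < 6 - 0.02 * M ∧ 10 - 0.05 * M < 6 - 0.02 * M := by
  have a2_le_max : ∀ M : ℝ, 6 - 0.02 * M ≤ max (5 - 0.01 * M) (10 - 0.05 * M) := fun M =>
    (penalized_a2_lt_combo M).le.trans <|
      Convex.combo_le_max _ _ (by norm_num) (by norm_num) (by norm_num)
  refine ⟨a2_le_max, ?_⟩
  rintro ⟨M, h₁, h₃⟩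
  exact (a2_le_max M).not_gt (max_lt h₁ h₃)
end
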